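/- arXiv:2505.12687 — 2 statements merged into one kernel-verified Lean document; each statement's English description precedes it below -/
import Mathlib

section
/- Let k ≥ 2 and q ≥ 3 be integers. Then for any integer a with 1 ≤ a ≤ q − 1 (not necessarily coprime to q), one has ζ⁻(k, a/q) ∈ V_k⁻(q), ζ⁺(k, a/q) ∈ V_k⁺(q), and ζ(k, a/q) ∈ V_k(q). -/
open Finset

/-- The Hurwitz zeta value `ζ(k, x) = ∑_{m ≥ 0} 1/(m+x)^k`. -/
noncomputable def hzeta (k : ℕ) (x : ℝ) : ℝ := ∑' m : ℕ, 1 / ((m : ℝ) + x) ^ k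

/-- The odd part `ζ⁻(k, a/q) = ζ(k, a/q) − (−1)^k ζ(k, 1 − a/q)`. -/
noncomputable def zetaMinus (k a q : ℕ) : ℝ :=
  hzeta k ((a : ℝ) / q) - (-1 : ℝ) ^ k * hzeta k (1 - (a : ℝ) / q)

/-- The even part `ζ⁺(k, a/q) = ζ(k, a/q) + (−1)^k ζ(k, 1 − a/q)`. -/
noncomputable def zetaPlus (k a q : ℕ) : ℝ :=
  hzeta k ((a : ℝ) / q) + (-1 : ℝ) ^ k * hzeta k (1 - (a : ℝ) / q)

/-- `V_k⁻(q)` for `q ≥ 3`; for `q = 2` it is defined as `ℚ · ζ⁻(k, 1/2)`. -/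
noncomputable def Vminus (k q : ℕ) : Submodule ℚ ℝ :=
  if q = 2 then Submodule.span ℚ {zetaMinus k 1 2}
  else Submodule.span ℚ
    {x : ℝ | ∃ a : ℕ, 1 ≤ a ∧ 2 * a < q ∧ Nat.gcd a q = 1 ∧ x = zetaMinus k a q}

/-- `V_k⁺(q)` for `q ≥ 3`; for `q = 2` it is defined as `ℚ · ζ⁺(k, 1/2)`. -/
noncomputable def Vplus (k q : ℕ) : Submodule ℚ ℝ :=
  if q = 2 then Submodule.span ℚ {zetaPlus k 1 2}
  else Submodule.span ℚ
    {x : ℝ | ∃ a : ℕ, 1 ≤ a ∧ 2 * a < q ∧ Nat.gcd a q = 1 ∧ x = zetaPlus k a q}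

/-- `V_k(q)`, the ℚ-span of `ζ(k, a/q)` for `1 ≤ a < q` coprime to `q`
(for `q = 2` this gives `ℚ · ζ(k, 1/2)` as well). -/
noncomputable def Vfull (k q : ℕ) : Submodule ℚ ℝ :=
  Submodule.span ℚ
    {x : ℝ | ∃ a : ℕ, 1 ≤ a ∧ a < q ∧ Nat.gcd a q = 1 ∧ x = hzeta k ((a : ℝ) / q)}

/-! The Hurwitz zeta function satisfies the distribution relation
`d^k ζ(k, x) = ∑_{j<d} ζ(k, (x + j)/d)`, hence so do `ζ⁺` and `ζ⁻`. Writing `a/q` in lowest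
terms `a'/q'`, it suffices to show that the values at reduced fractions with denominator `n` lie
in the span of those with denominator `np`, `p` prime. The relation with `d = p` expresses
`p^k G(a/n)` through the values at `(a + jn)/(np)`; these fractions are reduced except, when
`p ∤ n`, for exactly one `j`, whose term is `G(b/n)` with `b/n` reduced. So
`p^k G(a/n) ≡ G(σ a/n)` modulo the span for `np`; iterating until `σ^s a = σ^t a` gives
`(p^{kt} - p^{ks}) G(a/n) ≡ 0`. The half-range spans come from `G(1 - x) = ±G(x)`. -/

theorem summable_one_div_nat_add_pow {k : ℕ} (hk : 2 ≤ k) {x : ℝ} (hx : 0 < x) :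
    Summable fun m : ℕ => 1 / ((m : ℝ) + x) ^ k := by
  refine ((Real.summable_one_div_nat_add_rpow x k).2 (by exact_mod_cast hk)).congr fun m => ?_
  rw [abs_of_pos (by positivity), Real.rpow_natCast]

theorem hzeta_mul_pow_eq_sum {k : ℕ} (hk : 2 ≤ k) {d : ℕ} (hd : 0 < d) {x : ℝ} (hx : 0 < x) :
    (d : ℝ) ^ k * hzeta k x = ∑ j ∈ range d, hzeta k ((x + j) / d) := by
  obtain ⟨n, rfl⟩ : ∃ n, d = n + 1 := ⟨d - 1, by omega⟩
  rw [hzeta, Nat.sumByResidueClasses (summable_one_div_nat_add_pow hk hx) (n + 1), mul_sum,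
    Finset.sum_range]
  refine Fintype.sum_congr _ _ fun j : Fin (n + 1) => ?_
  rw [hzeta, ← tsum_mul_left]
  congr 1 with m
  rw [show ZMod.val (n := n + 1) j = j.val from rfl]
  have hshift : (m : ℝ) + (x + j.val) / (n + 1 : ℕ) =
      ((j.val + (n + 1) * m : ℕ) + x) / (n + 1 : ℕ) := by
    push_cast
    field_simp
    ring
  rw [hshift, div_pow, one_div_div, mul_one_div]

-- Only `0 < x < 1` is asked for, so that the relation passes to `x ↦ G (1 - x)`.
def DistributionRelation (k : ℕ) (G : ℝ → ℝ) : Prop :=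
  ∀ d : ℕ, 0 < d → ∀ x : ℝ, 0 < x → x < 1 → (d : ℝ) ^ k * G x = ∑ j ∈ range d, G ((x + j) / d)

theorem distributionRelation_hzeta {k : ℕ} (hk : 2 ≤ k) : DistributionRelation k (hzeta k) :=
  fun _ hd _ hx _ => hzeta_mul_pow_eq_sum hk hd hx

namespace DistributionRelation

variable {k : ℕ} {F G : ℝ → ℝ}

theorem sub (hF : DistributionRelation k F) (hG : DistributionRelation k G) :
    DistributionRelation k fun x => F x - G x := fun d hd x hx hx1 => by
  rw [mul_sub, hF d hd x hx hx1, hG d hd x hx hx1, sum_sub_distrib]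

theorem add (hF : DistributionRelation k F) (hG : DistributionRelation k G) :
    DistributionRelation k fun x => F x + G x := fun d hd x hx hx1 => by
  rw [mul_add, hF d hd x hx hx1, hG d hd x hx hx1, sum_add_distrib]

theorem const_mul (hG : DistributionRelation k G) (c : ℝ) :
    DistributionRelation k fun x => c * G x := fun d hd x hx hx1 => by
  rw [mul_left_comm, hG d hd x hx hx1, mul_sum]

theorem comp_one_sub (hG : DistributionRelation k G) :
    DistributionRelation k fun x => G (1 - x) := fun d hd x hx hx1 => by
  rw [hG d hd (1 - x) (by linarith) (by linarith), ← sum_range_reflect]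
  refine sum_congr rfl fun j hj => congrArg G ?_
  have hjd := mem_range.1 hj
  rw [Nat.cast_sub (by omega), Nat.cast_sub (by omega)]
  field_simp
  ring

end DistributionRelation

theorem Submodule.mem_of_forall_exists_smul_sub_mem {K M α : Type*} [Field K] [LinearOrder K]
    [IsStrictOrderedRing K] [AddCommGroup M] [Module K M] {W : Submodule K M} {s : Finset α}
    {f : α → M} {c : K} (hc : 1 < c) (h : ∀ a ∈ s, ∃ b ∈ s, c • f a - f b ∈ W) :
    ∀ a ∈ s, f a ∈ W := by
  choose! σ hσs hσW using h
  intro a ha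
  have hiter : ∀ t : ℕ, σ^[t] a ∈ s ∧ c ^ t • f a - f (σ^[t] a) ∈ W := by
    intro t
    induction t with
    | zero => simp [ha]
    | succ t ih =>
      rw [Function.iterate_succ_apply']
      refine ⟨hσs _ ih.1, ?_⟩
      convert W.add_mem (W.smul_mem c ih.2) (hσW _ ih.1) using 1
      rw [pow_succ', mul_smul, smul_sub]
      abel
  obtain ⟨t₁, -, t₂, -, hne, heq⟩ := Finset.exists_ne_map_eq_of_card_lt_of_maps_to
    (s := range (s.card + 1)) (by simp) fun t _ => (hiter t).1
  wlog hlt : t₁ < t₂ generalizing t₁ t₂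
  · exact this t₂ t₁ hne.symm heq.symm (hne.lt_or_gt.resolve_left hlt)
  have hsub := W.sub_mem (hiter t₂).2 (hiter t₁).2
  rw [heq, sub_sub_sub_cancel_right, ← sub_smul] at hsub
  exact (W.smul_mem_iff (sub_ne_zero.2 (pow_lt_pow_right₀ hc hlt).ne')).1 hsub

theorem Nat.exists_lt_dvd_add_mul {p n : ℕ} (hp : p.Prime) (hpn : ¬p ∣ n) (a : ℕ) :
    ∃ j < p, p ∣ a + j * n := by
  have := Fact.mk hp
  have hn : (n : ZMod p) ≠ 0 := by rwa [Ne, ZMod.natCast_eq_zero_iff]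
  refine ⟨(-a * (n : ZMod p)⁻¹).val, ZMod.val_lt _, ?_⟩
  rw [← ZMod.natCast_eq_zero_iff]
  push_cast
  rw [ZMod.natCast_zmod_val, mul_assoc, inv_mul_cancel₀ hn]
  ring

theorem Nat.eq_of_dvd_add_mul {p n a i j : ℕ} (hp : p.Prime) (hpn : ¬p ∣ n) (hi : i < p)
    (hj : j < p) (hpi : p ∣ a + i * n) (hpj : p ∣ a + j * n) : i = j := by
  have := Fact.mk hp
  have hn : (n : ZMod p) ≠ 0 := by rwa [Ne, ZMod.natCast_eq_zero_iff]
  rw [← ZMod.natCast_eq_zero_iff] at hpi hpj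
  push_cast at hpi hpj
  have hij : (i : ZMod p) = j := mul_right_cancel₀ hn (by linear_combination hpi - hpj)
  rwa [ZMod.natCast_eq_natCast_iff', Nat.mod_eq_of_lt hi, Nat.mod_eq_of_lt hj] at hij

noncomputable def coprimeSpan (G : ℝ → ℝ) (q : ℕ) : Submodule ℚ ℝ :=
  Submodule.span ℚ {x : ℝ | ∃ a : ℕ, 1 ≤ a ∧ a < q ∧ Nat.gcd a q = 1 ∧ x = G ((a : ℝ) / q)}

noncomputable def halfCoprimeSpan (G : ℝ → ℝ) (q : ℕ) : Submodule ℚ ℝ :=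
  Submodule.span ℚ {x : ℝ | ∃ a : ℕ, 1 ≤ a ∧ 2 * a < q ∧ Nat.gcd a q = 1 ∧ x = G ((a : ℝ) / q)}

theorem mem_coprimeSpan_mul_of_coprime (G : ℝ → ℝ) {n d a j : ℕ} (ha : 1 ≤ a) (han : a < n)
    (hcop : Nat.gcd a n = 1) (hj : j < d) (hd : Nat.Coprime (a + j * n) d) :
    G (((a + j * n : ℕ) : ℝ) / (n * d : ℕ)) ∈ coprimeSpan G (n * d) :=
  Submodule.subset_span ⟨a + j * n, by omega, by nlinarith,
    Nat.Coprime.mul_right ((Nat.coprime_add_mul_right_left a n j).2 hcop) hd, rfl⟩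

namespace DistributionRelation

variable {k : ℕ} {G : ℝ → ℝ}

theorem mul_pow_eq_sum_natCast (hG : DistributionRelation k G) {n d a : ℕ} (hd : 0 < d)
    (ha : 1 ≤ a) (han : a < n) :
    (d : ℝ) ^ k * G ((a : ℝ) / n) = ∑ j ∈ range d, G (((a + j * n : ℕ) : ℝ) / (n * d : ℕ)) := by
  have hn : (0 : ℝ) < n := by exact_mod_cast Nat.zero_lt_of_lt han
  rw [hG d hd _ (by positivity) ((div_lt_one hn).2 (by exact_mod_cast han))]
  refine sum_congr rfl fun j _ => congrArg G ?_
  push_cast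
  field_simp

theorem mem_coprimeSpan_mul_prime_of_dvd (hG : DistributionRelation k G) {n p a : ℕ}
    (hp : p.Prime) (hpn : p ∣ n) (ha : 1 ≤ a) (han : a < n) (hcop : Nat.gcd a n = 1) :
    G ((a : ℝ) / n) ∈ coprimeSpan G (n * p) := by
  have hpk : (p : ℚ) ^ k ≠ 0 := pow_ne_zero k (Nat.cast_ne_zero.2 hp.ne_zero)
  rw [← Submodule.smul_mem_iff _ hpk, Rat.smul_def, Rat.cast_pow, Rat.cast_natCast,
    hG.mul_pow_eq_sum_natCast hp.pos ha han]
  refine Submodule.sum_mem _ fun j hj => mem_coprimeSpan_mul_of_coprime G ha han hcop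
    (mem_range.1 hj) ((Nat.coprime_comm.1 (hp.coprime_iff_not_dvd.2 fun hpa => ?_)))
  exact hp.one_lt.ne'
    (Nat.eq_one_of_dvd_coprimes hcop ((Nat.dvd_add_left (hpn.mul_left j)).1 hpa) hpn)

theorem exists_smul_sub_mem_coprimeSpan_mul_prime (hG : DistributionRelation k G) {n p a : ℕ}
    (hp : p.Prime) (hpn : ¬p ∣ n) (ha : 1 ≤ a) (han : a < n) (hcop : Nat.gcd a n = 1) :
    ∃ b, (1 ≤ b ∧ b < n ∧ Nat.gcd b n = 1) ∧
      ((p : ℚ) ^ k) • G ((a : ℝ) / n) - G ((b : ℝ) / n) ∈ coprimeSpan G (n * p) := by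
  obtain ⟨j₀, hj₀, b, hb⟩ := Nat.exists_lt_dvd_add_mul hp hpn a
  have hbn : b < n := by nlinarith [hp.two_le]
  have hterm : G (((a + j₀ * n : ℕ) : ℝ) / (n * p : ℕ)) = G ((b : ℝ) / n) := by
    rw [hb]
    push_cast
    field_simp [hp.ne_zero]
  refine ⟨b, ⟨by nlinarith, hbn, Nat.Coprime.coprime_dvd_left (Dvd.intro_left p hb.symm)
    ((Nat.coprime_add_mul_right_left a n j₀).2 hcop)⟩, ?_⟩
  rw [Rat.smul_def, Rat.cast_pow, Rat.cast_natCast, hG.mul_pow_eq_sum_natCast hp.pos ha han,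
    ← sum_erase_add _ _ (mem_range.2 hj₀), hterm, add_sub_cancel_right]
  refine Submodule.sum_mem _ fun j hj => ?_
  obtain ⟨hjj₀, hjp⟩ := mem_erase.1 hj
  refine mem_coprimeSpan_mul_of_coprime G ha han hcop (mem_range.1 hjp)
    (Nat.coprime_comm.1 (hp.coprime_iff_not_dvd.2 fun hpj => hjj₀ ?_))
  exact Nat.eq_of_dvd_add_mul hp hpn (mem_range.1 hjp) hj₀ hpj ⟨b, hb⟩

theorem coprimeSpan_le_mul_prime (hG : DistributionRelation k G) (hk : k ≠ 0) {p : ℕ}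
    (hp : p.Prime) (n : ℕ) : coprimeSpan G n ≤ coprimeSpan G (n * p) := by
  rw [coprimeSpan, Submodule.span_le]
  rintro _ ⟨a, ha, han, hcop, rfl⟩
  by_cases hpn : p ∣ n
  · exact hG.mem_coprimeSpan_mul_prime_of_dvd hp hpn ha han hcop
  let s := (range n).filter fun b => 1 ≤ b ∧ Nat.gcd b n = 1
  have hpk : (1 : ℚ) < (p : ℚ) ^ k := one_lt_pow₀ (by exact_mod_cast hp.one_lt) hk
  refine Submodule.mem_of_forall_exists_smul_sub_mem (s := s) (f := fun b : ℕ => G ((b : ℝ) / n))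
    hpk (fun b hb => ?_) a (by simp [s, ha, han, hcop])
  simp only [s, mem_filter, mem_range] at hb
  obtain ⟨c, ⟨hc1, hcn, hccop⟩, hmem⟩ :=
    hG.exists_smul_sub_mem_coprimeSpan_mul_prime hp hpn hb.2.1 hb.1 hb.2.2
  exact ⟨c, by simp [s, hc1, hcn, hccop], hmem⟩

theorem coprimeSpan_le_mul (hG : DistributionRelation k G) (hk : k ≠ 0) {m : ℕ} (hm : m ≠ 0)
    (n : ℕ) : coprimeSpan G n ≤ coprimeSpan G (n * m) := by
  induction m using induction_on_primes generalizing n with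
  | zero => exact absurd rfl hm
  | one => rw [mul_one]
  | prime_mul p m hp ih =>
    calc coprimeSpan G n ≤ coprimeSpan G (n * m) := ih (right_ne_zero_of_mul hm) n
      _ ≤ coprimeSpan G (n * m * p) := hG.coprimeSpan_le_mul_prime hk hp _
      _ = coprimeSpan G (n * (p * m)) := by rw [mul_comm p, mul_assoc]

theorem mem_coprimeSpan (hG : DistributionRelation k G) (hk : k ≠ 0) {a q : ℕ} (ha : 1 ≤ a)
    (haq : a < q) : G ((a : ℝ) / q) ∈ coprimeSpan G q := by
  set g := Nat.gcd a q
  have hg : 0 < g := Nat.gcd_pos_of_pos_left q ha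
  have hga : g ∣ a := Nat.gcd_dvd_left a q
  have hgq : g ∣ q := Nat.gcd_dvd_right a q
  have hreduce : (a : ℝ) / q = ((a / g : ℕ) : ℝ) / (q / g : ℕ) := by
    rw [Nat.cast_div hga (by positivity), Nat.cast_div hgq (by positivity),
      div_div_div_cancel_right₀ (by positivity)]
  rw [hreduce, ← Nat.div_mul_cancel hgq]
  refine hG.coprimeSpan_le_mul hk hg.ne' (q / g) (Submodule.subset_span ⟨a / g, ?_, ?_,
    Nat.coprime_div_gcd_div_gcd hg, by rw [Nat.div_mul_cancel hgq]⟩)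
  · exact (Nat.one_le_div_iff hg).2 (Nat.le_of_dvd ha hga)
  · exact Nat.div_lt_div_of_lt_of_dvd hgq haq

end DistributionRelation

theorem coprimeSpan_le_halfCoprimeSpan {G : ℝ → ℝ} {s : ℚ} (hG : ∀ x, G (1 - x) = s * G x)
    {q : ℕ} (hq : q ≠ 2) : coprimeSpan G q ≤ halfCoprimeSpan G q := by
  rw [coprimeSpan, Submodule.span_le]
  rintro _ ⟨b, hb, hbq, hcop, rfl⟩
  rcases lt_trichotomy (2 * b) q with hlt | heq | hgt
  · exact Submodule.subset_span ⟨b, hb, hlt, hcop, rfl⟩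
  · rw [← heq, Nat.gcd_mul_left_right] at hcop
    omega
  · have hmem : G (((q - b : ℕ) : ℝ) / q) ∈ halfCoprimeSpan G q :=
      Submodule.subset_span ⟨q - b, by omega, by omega,
        (Nat.coprime_self_sub_left hbq.le).2 hcop, rfl⟩
    have hrefl : G ((b : ℝ) / q) = s * G (((q - b : ℕ) : ℝ) / q) := by
      have hq0 : (q : ℝ) ≠ 0 := Nat.cast_ne_zero.2 (by omega)
      rw [← hG, Nat.cast_sub hbq.le]
      congr 1
      field_simp
      ring
    rw [hrefl, ← Rat.smul_def]
    exact Submodule.smul_mem _ s hmem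

theorem add_reflect_eq (h : ℝ → ℝ) {ε : ℝ} (hε : ε * ε = 1) (x : ℝ) :
    h (1 - x) + ε * h (1 - (1 - x)) = ε * (h x + ε * h (1 - x)) := by
  rw [sub_sub_cancel]
  linear_combination (-h (1 - x)) * hε

theorem sub_reflect_eq (h : ℝ → ℝ) {ε : ℝ} (hε : ε * ε = 1) (x : ℝ) :
    h (1 - x) - ε * h (1 - (1 - x)) = -ε * (h x - ε * h (1 - x)) := by
  rw [sub_sub_cancel]
  linear_combination (-h (1 - x)) * hε

theorem stmt_9 (k q : ℕ) (hk : 2 ≤ k) (hq : 3 ≤ q) :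
    ∀ a : ℕ, 1 ≤ a → a ≤ q - 1 →
      zetaMinus k a q ∈ Vminus k q ∧ zetaPlus k a q ∈ Vplus k q ∧
        hzeta k ((a : ℝ) / q) ∈ Vfull k q := by
  intro a ha haq
  have hq2 : q ≠ 2 := by omega
  have hk0 : k ≠ 0 := by omega
  replace haq : a < q := by omega
  have hε : (-1 : ℝ) ^ k * (-1) ^ k = 1 := by rw [← mul_pow, neg_one_mul, neg_neg, one_pow]
  have hz := distributionRelation_hzeta hk
  refine ⟨?_, ?_, hz.mem_coprimeSpan hk0 ha haq⟩
  · rw [Vminus, if_neg hq2]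
    refine coprimeSpan_le_halfCoprimeSpan (G := fun x => hzeta k x - (-1) ^ k * hzeta k (1 - x))
      (s := -(-1) ^ k) (fun x => ?_) hq2 ?_
    · push_cast
      exact sub_reflect_eq (hzeta k) hε x
    · exact (hz.sub (hz.comp_one_sub.const_mul _)).mem_coprimeSpan hk0 ha haq
  · rw [Vplus, if_neg hq2]
    refine coprimeSpan_le_halfCoprimeSpan (G := fun x => hzeta k x + (-1) ^ k * hzeta k (1 - x))
      (s := (-1) ^ k) (fun x => ?_) hq2 ?_
    · push_cast
      exact add_reflect_eq (hzeta k) hε x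
    · exact (hz.add (hz.comp_one_sub.const_mul _)).mem_coprimeSpan hk0 ha haq
end

section
/- Let k ≥ 2 and q ≥ 3 be integers. Then the ℚ-linear span of the set {1, δ_k ζ(k)} ∪ {ζ⁻(k, a/q) : a ∈ ℤ, 1 ≤ a < q/2} equals ℚ + V_k⁻(q). In particular, if k is odd then ζ(k) ∈ V_k⁻(q). -/
open Finset

/-!
Write `ζ⁻(k, x) = ζ(k, x) - (-1)^k ζ(k, 1 - x)` for real `x`; it satisfies the distribution
relation `∑_{j<n} ζ⁻(k, (x + j)/n) = n^k ζ⁻(k, x)` and `ζ⁻(k, 1 - x) = -(-1)^k ζ⁻(k, x)`.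

If `gcd(a, q) > 1` then `ζ⁻(k, a/q) = ζ⁻(k, a'/q')` with `a'/q'` in lowest terms and `q' ∣ q`,
so it suffices to show `V_k⁻(q) ⊆ V_k⁻(pq)` for a prime `p`. The distribution relation with
`n = p` writes `p^k ζ⁻(k, b/q)` as the sum of the values at `(b + jq)/(pq)`, `j < p`, which
are all in lowest terms except, when `p ∤ q`, exactly one. For `b ≡ pc (mod q)` that
exceptional value is `ζ⁻(k, c/q)`, so `ζ⁻(k, c/q) ≡ p^k ζ⁻(k, (pc mod q)/q)` modulo
`V_k⁻(pq)`. Iterating `φ(q)` times returns to `c`, whence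
`(p^(k φ(q)) - 1) ζ⁻(k, c/q) ∈ V_k⁻(pq)`.

For odd `k` the sum of `ζ⁻(k, a/q)` over `1 ≤ a < q` is `2 (q^k - 1) ζ(k)`, and every term
except `a = q/2`, itself a multiple of `ζ(k)`, lies in `V_k⁻(q)`.
-/

lemma Submodule.mem_of_sModEq_smul {K M : Type*} [Field K] [AddCommGroup M] [Module K M]
    {W : Submodule K M} {x : M} {c : K} (hc : c ≠ 1) (h : x ≡ c • x [SMOD W]) : x ∈ W := by
  rw [SModEq.sub_mem] at h
  have h' : (1 - c) • x ∈ W := by rwa [sub_smul, one_smul]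
  exact (W.smul_mem_iff (sub_ne_zero.mpr hc.symm)).mp h'

section

variable {k : ℕ}

lemma summable_one_div_add_pow (hk : 1 < k) (x : ℝ) :
    Summable (fun m : ℕ => 1 / ((m : ℝ) + x) ^ k) := by
  refine Summable.of_norm ?_
  have h := (Real.summable_one_div_nat_add_rpow x k).mpr (by exact_mod_cast hk)
  simpa only [norm_div, norm_one, norm_pow, Real.norm_eq_abs, Real.rpow_natCast] using h

lemma sum_zmod_val_eq_sum_range {M : Type*} [AddCommMonoid M] {n : ℕ} [NeZero n] (f : ℕ → M) :
    ∑ j : ZMod n, f j.val = ∑ j ∈ range n, f j :=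
  Finset.sum_nbij' (fun j => j.val) (fun j => (j : ZMod n)) (fun j _ => mem_range.mpr j.val_lt)
    (fun _ _ => mem_univ _) (fun j _ => ZMod.natCast_zmod_val j)
    (fun _ hj => ZMod.val_cast_of_lt (mem_range.mp hj)) (fun _ _ => rfl)

lemma sum_hzeta_add_div (hk : 1 < k) {n : ℕ} (hn : n ≠ 0) (x : ℝ) :
    ∑ j ∈ range n, hzeta k ((x + j) / n) = (n : ℝ) ^ k * hzeta k x := by
  have : NeZero n := ⟨hn⟩
  set F : ℕ → ℝ := fun t => 1 / ((t : ℝ) + x) ^ k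
  have hterm (j : ℕ) : hzeta k ((x + j) / n) = (n : ℝ) ^ k * ∑' m : ℕ, F (j + n * m) := by
    rw [hzeta, ← tsum_mul_left]
    congr 1 with m
    have hn' : (n : ℝ) ≠ 0 := Nat.cast_ne_zero.mpr hn
    have : (m : ℝ) + (x + j) / n = (((j + n * m : ℕ) : ℝ) + x) / n := by
      push_cast; field_simp; ring
    rw [this, div_pow, one_div_div, mul_one_div]
  rw [hzeta, Nat.sumByResidueClasses (summable_one_div_add_pow hk x) n,
    sum_zmod_val_eq_sum_range (fun j => ∑' m : ℕ, F (j + n * m)), mul_sum]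
  exact sum_congr rfl fun j _ => hterm j

noncomputable def oddHzeta (k : ℕ) (x : ℝ) : ℝ := hzeta k x - (-1 : ℝ) ^ k * hzeta k (1 - x)

lemma zetaMinus_eq_oddHzeta (k a q : ℕ) : zetaMinus k a q = oddHzeta k ((a : ℝ) / q) := rfl

lemma oddHzeta_one_sub (k : ℕ) (x : ℝ) :
    oddHzeta k (1 - x) = -(-1 : ℝ) ^ k * oddHzeta k x := by
  have h : (-1 : ℝ) ^ k * (-1) ^ k = 1 := by rw [← mul_pow]; norm_num
  rw [oddHzeta, oddHzeta, sub_sub_cancel]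
  linear_combination (-hzeta k (1 - x)) * h

lemma oddHzeta_of_odd (hk : Odd k) (x : ℝ) : oddHzeta k x = hzeta k x + hzeta k (1 - x) := by
  rw [oddHzeta, hk.neg_one_pow]; ring

lemma sum_oddHzeta_add_div (hk : 1 < k) {n : ℕ} (hn : n ≠ 0) (x : ℝ) :
    ∑ j ∈ range n, oddHzeta k ((x + j) / n) = (n : ℝ) ^ k * oddHzeta k x := by
  have hreflect : ∀ j ∈ range n,
      1 - (x + j) / n = ((1 - x) + (n - 1 - j : ℕ)) / n := by
    intro j hj
    have hn' : (n : ℝ) ≠ 0 := Nat.cast_ne_zero.mpr hn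
    rw [Nat.cast_sub (by have := mem_range.mp hj; omega), Nat.cast_sub (by omega)]
    field_simp
    ring
  simp only [oddHzeta, sum_sub_distrib, ← mul_sum]
  rw [sum_congr rfl fun j hj => congrArg (hzeta k) (hreflect j hj),
    sum_range_reflect (fun j => hzeta k (((1 - x) + j) / n)) n,
    sum_hzeta_add_div hk hn, sum_hzeta_add_div hk hn]
  ring

lemma oddHzeta_sub_div_mem_iff (W : Submodule ℚ ℝ) {a q : ℕ} (ha : a ≤ q) (hq : q ≠ 0) :
    oddHzeta k ((q - a : ℕ) / q) ∈ W ↔ oddHzeta k (a / q) ∈ W := by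
  have hfrac : ((q - a : ℕ) : ℝ) / q = 1 - a / q := by
    rw [Nat.cast_sub ha, sub_div, div_self (Nat.cast_ne_zero.mpr hq)]
  have hsign : -(-1 : ℝ) ^ k = ((-(-1) ^ k : ℚ) : ℝ) := by push_cast; ring
  rw [hfrac, oddHzeta_one_sub, hsign, ← Rat.smul_def]
  exact W.smul_mem_iff (by simp)

lemma zetaMinus_mem_Vminus_of_coprime {a q : ℕ} (hq : 3 ≤ q) (ha : 1 ≤ a) (haq : 2 * a < q)
    (hcop : a.Coprime q) : zetaMinus k a q ∈ Vminus k q := by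
  rw [Vminus, if_neg (by omega)]
  exact Submodule.subset_span ⟨a, ha, haq, hcop, rfl⟩

lemma oddHzeta_mem_Vminus_of_coprime {b q : ℕ} (hq : 3 ≤ q) (hbq : b < q) (hcop : b.Coprime q) :
    oddHzeta k (b / q) ∈ Vminus k q := by
  have hb : 1 ≤ b := by
    rcases Nat.eq_zero_or_pos b with rfl | h
    · simp [Nat.Coprime] at hcop; omega
    · exact h
  rcases lt_or_ge (2 * b) q with h | h
  · exact zetaMinus_mem_Vminus_of_coprime hq hb h hcop
  · have h2b : 2 * b ≠ q := by
      rintro rfl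
      simp [Nat.Coprime] at hcop
      omega
    rw [← oddHzeta_sub_div_mem_iff _ hbq.le (by omega)]
    exact zetaMinus_mem_Vminus_of_coprime hq (by omega) (by omega)
      ((Nat.coprime_self_sub_left hbq.le).mpr hcop)

lemma smul_oddHzeta_eq_sum (hk : 1 < k) {p q : ℕ} (hp : p ≠ 0) (hq : q ≠ 0) (b : ℕ) :
    ((p : ℚ) ^ k) • oddHzeta k (b / q) =
      ∑ j ∈ range p, oddHzeta k ((b + j * q : ℕ) / (p * q : ℕ)) := by
  rw [Rat.smul_def, Rat.cast_pow, Rat.cast_natCast, ← sum_oddHzeta_add_div hk hp]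
  refine sum_congr rfl fun j _ => congrArg (oddHzeta k) ?_
  have hp' : (p : ℝ) ≠ 0 := Nat.cast_ne_zero.mpr hp
  have hq' : (q : ℝ) ≠ 0 := Nat.cast_ne_zero.mpr hq
  push_cast
  field_simp

lemma sum_filter_oddHzeta_mem_Vminus {p q b : ℕ} (hp : p.Prime) (hq : 3 ≤ q) (hbq : b < q)
    (hcop : b.Coprime q) :
    ∑ j ∈ (range p).filter (fun j => ¬ p ∣ b + j * q),
      oddHzeta k ((b + j * q : ℕ) / (p * q : ℕ)) ∈ Vminus k (p * q) := by
  refine Submodule.sum_mem _ fun j hj => ?_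
  obtain ⟨hjp, hpj⟩ := mem_filter.mp hj
  have hlt : b + j * q < p * q := by
    have : (j + 1) * q ≤ p * q := Nat.mul_le_mul_right q (mem_range.mp hjp)
    linarith
  refine oddHzeta_mem_Vminus_of_coprime (by nlinarith [hp.two_le]) hlt
    (Nat.Coprime.mul_right ?_ ((Nat.coprime_add_mul_right_left b q j).mpr hcop))
  exact (hp.coprime_iff_not_dvd.mpr hpj).symm

lemma oddHzeta_mem_Vminus_mul_of_dvd (hk : 1 < k) {p q b : ℕ} (hp : p.Prime) (hq : 3 ≤ q)
    (hpq : p ∣ q) (hbq : b < q) (hcop : b.Coprime q) :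
    oddHzeta k (b / q) ∈ Vminus k (p * q) := by
  have hnot_dvd : ∀ j ∈ range p, ¬ p ∣ b + j * q := by
    intro j _ hdvd
    have hpb : p ∣ b := (Nat.dvd_add_left (Dvd.dvd.mul_left hpq j)).mp hdvd
    exact hp.one_lt.ne' (Nat.eq_one_of_dvd_one (hcop ▸ Nat.dvd_gcd hpb hpq))
  have hpk : (p : ℚ) ^ k ≠ 0 := pow_ne_zero k (Nat.cast_ne_zero.mpr hp.ne_zero)
  rw [← (Vminus k (p * q)).smul_mem_iff hpk,
    smul_oddHzeta_eq_sum hk hp.ne_zero (by omega), ← filter_true_of_mem hnot_dvd]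
  exact sum_filter_oddHzeta_mem_Vminus hp hq hbq hcop

lemma oddHzeta_sModEq_smul_mul_mod (hk : 1 < k) {p q b : ℕ} (hp : p.Prime) (hq : 3 ≤ q)
    (hpq : ¬ p ∣ q) (hbq : b < q) (hcop : b.Coprime q) :
    oddHzeta k (b / q) ≡ ((p : ℚ) ^ k) • oddHzeta k ((p * b % q : ℕ) / q)
      [SMOD Vminus k (p * q)] := by
  set r := p * b % q
  set j₀ := p * b / q
  have hr : r + j₀ * q = p * b := by rw [mul_comm j₀]; exact Nat.mod_add_div _ _
  have hj₀ : j₀ < p :=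
    (Nat.div_lt_iff_lt_mul (by omega)).mpr (Nat.mul_lt_mul_of_pos_left hbq hp.pos)
  have hunique : ∀ j ∈ range p, p ∣ r + j * q → j = j₀ := by
    intro j hj hdvd
    have hmod : r + j * q ≡ r + j₀ * q [MOD p] :=
      (Nat.modEq_zero_iff_dvd.mpr hdvd).trans
        (Nat.modEq_zero_iff_dvd.mpr (hr ▸ dvd_mul_right p b)).symm
    exact Nat.ModEq.eq_of_lt_of_lt
      (Nat.ModEq.cancel_right_of_coprime (hp.coprime_iff_not_dvd.mpr hpq)
        (Nat.ModEq.add_left_cancel' r hmod)) (mem_range.mp hj) hj₀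
  have hsingle : ∑ j ∈ (range p).filter (fun j => p ∣ r + j * q),
      oddHzeta k ((r + j * q : ℕ) / (p * q : ℕ)) = oddHzeta k (b / q) := by
    rw [sum_eq_single_of_mem j₀ (mem_filter.mpr ⟨mem_range.mpr hj₀, hr ▸ dvd_mul_right p b⟩)
      fun j hj hne => absurd (hunique j (mem_filter.mp hj).1 (mem_filter.mp hj).2) hne, hr]
    push_cast
    rw [mul_div_mul_left _ _ (Nat.cast_ne_zero.mpr hp.ne_zero)]
  have hrcop : r.Coprime q :=
    (ZMod.coprime_mod_iff_coprime _ q).mpr ((hp.coprime_iff_not_dvd.mpr hpq).mul_left hcop)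
  rw [SModEq.sub_mem, smul_oddHzeta_eq_sum hk hp.ne_zero (by omega),
    ← sum_filter_add_sum_filter_not (range p) (fun j => p ∣ r + j * q), hsingle,
    sub_add_cancel_left]
  exact Submodule.neg_mem _ (sum_filter_oddHzeta_mem_Vminus hp hq (Nat.mod_lt _ (by omega)) hrcop)

lemma oddHzeta_mem_Vminus_mul_of_not_dvd (hk : 1 < k) {p q b : ℕ} (hp : p.Prime) (hq : 3 ≤ q)
    (hpq : ¬ p ∣ q) (hbq : b < q) (hcop : b.Coprime q) :
    oddHzeta k (b / q) ∈ Vminus k (p * q) := by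
  have hpcop : p.Coprime q := hp.coprime_iff_not_dvd.mpr hpq
  have hiter : ∀ n b, b < q → b.Coprime q →
      oddHzeta k (b / q) ≡ ((p : ℚ) ^ k) ^ n • oddHzeta k ((p ^ n * b % q : ℕ) / q)
        [SMOD Vminus k (p * q)] := by
    intro n
    induction n with
    | zero => intro b hbq _; simp [Nat.mod_eq_of_lt hbq]
    | succ n ih =>
      intro b hbq hcop
      have hrcop : (p * b % q).Coprime q :=
        (ZMod.coprime_mod_iff_coprime _ q).mpr (hpcop.mul_left hcop)
      refine (oddHzeta_sModEq_smul_mul_mod hk hp hq hpq hbq hcop).trans ?_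
      refine ((ih _ (Nat.mod_lt _ (by omega)) hrcop).smul _).trans ?_
      rw [smul_smul, ← pow_succ', Nat.mul_mod_mod, ← mul_assoc, ← pow_succ]
  have hperiod : p ^ q.totient * b % q = b := by
    have := (Nat.ModEq.pow_totient hpcop).mul_right b
    rwa [one_mul, Nat.ModEq, Nat.mod_eq_of_lt hbq] at this
  have hc : ((p : ℚ) ^ k) ^ q.totient ≠ 1 :=
    (one_lt_pow₀ (one_lt_pow₀ (by exact_mod_cast hp.one_lt) (by omega))
      (Nat.totient_pos.mpr (by omega)).ne').ne'
  exact Submodule.mem_of_sModEq_smul hc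
    (by simpa only [hperiod] using hiter q.totient b hbq hcop)

lemma Vminus_le_Vminus_prime_mul (hk : 1 < k) {p q : ℕ} (hp : p.Prime) (hq : 3 ≤ q) :
    Vminus k q ≤ Vminus k (p * q) := by
  rw [Vminus, if_neg (by omega), Submodule.span_le]
  rintro _ ⟨b, -, hbq, hcop, rfl⟩
  by_cases hpq : p ∣ q
  · exact oddHzeta_mem_Vminus_mul_of_dvd hk hp hq hpq (by omega) hcop
  · exact oddHzeta_mem_Vminus_mul_of_not_dvd hk hp hq hpq (by omega) hcop

lemma Vminus_le_Vminus_mul (hk : 1 < k) {q : ℕ} (hq : 3 ≤ q) {m : ℕ} (hm : m ≠ 0) :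
    Vminus k q ≤ Vminus k (m * q) := by
  induction m using induction_on_primes with
  | zero => exact absurd rfl hm
  | one => rw [one_mul]
  | prime_mul p a hp ih =>
    have ha : a ≠ 0 := by rintro rfl; simp at hm
    rw [mul_assoc]
    exact (ih ha).trans (Vminus_le_Vminus_prime_mul hk hp (by nlinarith [Nat.pos_of_ne_zero ha]))

lemma zetaMinus_mem_Vminus (hk : 1 < k) {a q : ℕ} (ha : 1 ≤ a) (haq : 2 * a < q) :
    zetaMinus k a q ∈ Vminus k q := by
  obtain ⟨g, a', q', hg, hcop, rfl, rfl⟩ := Nat.exists_coprime' (Nat.gcd_pos_of_pos_left q ha)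
  have ha' : 1 ≤ a' := Nat.pos_of_mul_pos_right ha
  have haq' : 2 * a' < q' := Nat.lt_of_mul_lt_mul_right (a := g) (by rwa [mul_assoc])
  have hfrac : ((a' * g : ℕ) : ℝ) / (q' * g : ℕ) = a' / q' := by
    push_cast
    exact mul_div_mul_right _ _ (by positivity)
  rw [zetaMinus_eq_oddHzeta, hfrac, mul_comm q']
  exact Vminus_le_Vminus_mul hk (by omega) hg.ne'
    (zetaMinus_mem_Vminus_of_coprime (by omega) ha' haq' hcop)

lemma oddHzeta_mem_Vminus (hk : 1 < k) {a q : ℕ} (ha : 1 ≤ a) (haq : a < q) (h2a : 2 * a ≠ q) :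
    oddHzeta k (a / q) ∈ Vminus k q := by
  rcases lt_or_gt_of_ne h2a with h | h
  · exact zetaMinus_mem_Vminus hk ha h
  · rw [← oddHzeta_sub_div_mem_iff _ haq.le (by omega)]
    exact zetaMinus_mem_Vminus hk (by omega) (by omega)

lemma sum_Ico_hzeta_div (hk : 1 < k) {q : ℕ} (hq : q ≠ 0) :
    ∑ a ∈ Ico 1 q, hzeta k (a / q) = ((q : ℝ) ^ k - 1) * hzeta k 1 := by
  have h := sum_hzeta_add_div hk hq 1
  obtain ⟨n, rfl⟩ : ∃ n, q = n + 1 := ⟨q - 1, by omega⟩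
  rw [sum_range_succ] at h
  rw [sum_Ico_eq_sum_range, Nat.add_sub_cancel]
  push_cast at h ⊢
  rw [add_comm 1 (n : ℝ), div_self (by positivity)] at h
  linarith

lemma sum_Ico_oddHzeta_div (hk : 1 < k) (hodd : Odd k) {q : ℕ} (hq : q ≠ 0) :
    ∑ a ∈ Ico 1 q, oddHzeta k (a / q) = 2 * ((q : ℝ) ^ k - 1) * hzeta k 1 := by
  have hreflect : ∑ a ∈ Ico 1 q, hzeta k (1 - a / q) = ∑ a ∈ Ico 1 q, hzeta k (a / q) := by
    have h : ∀ a ∈ Ico 1 q, hzeta k (1 - a / q) = hzeta k ((q - a : ℕ) / q) := by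
      intro a ha
      rw [Nat.cast_sub (mem_Ico.mp ha).2.le, sub_div, div_self (Nat.cast_ne_zero.mpr hq)]
    rw [sum_congr rfl h, sum_Ico_reflect (fun a => hzeta k (a / q)) 1 q.le_succ,
      Nat.add_sub_cancel_left, Nat.add_sub_cancel]
  simp only [oddHzeta_of_odd hodd, sum_add_distrib, hreflect, sum_Ico_hzeta_div hk hq]
  ring

lemma oddHzeta_half (hk : 1 < k) (hodd : Odd k) :
    oddHzeta k (1 / 2) = 2 * ((2 : ℝ) ^ k - 1) * hzeta k 1 := by
  simpa using sum_Ico_oddHzeta_div hk hodd two_ne_zero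

lemma hzeta_one_mem_Vminus (hk : 1 < k) (hodd : Odd k) {q : ℕ} (hq : 3 ≤ q) :
    hzeta k 1 ∈ Vminus k q := by
  set s := Ico 1 q
  set N := #(s.filter (fun a => 2 * a = q))
  have hN : N ≤ 1 := card_le_one.mpr fun a ha b hb =>
    Nat.eq_of_mul_eq_mul_left two_pos ((mem_filter.mp ha).2.trans (mem_filter.mp hb).2.symm)
  have hhalf : ∑ a ∈ s.filter (fun a => 2 * a = q), oddHzeta k (a / q)
      = N * (2 * ((2 : ℝ) ^ k - 1) * hzeta k 1) := by
    rw [← oddHzeta_half hk hodd, ← nsmul_eq_mul, ← sum_const]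
    refine sum_congr rfl fun a ha => congrArg (oddHzeta k) ?_
    obtain ⟨has, h2a⟩ := mem_filter.mp ha
    have : (a : ℝ) ≠ 0 := Nat.cast_ne_zero.mpr (by simp [s] at has; omega)
    rw [← h2a]
    push_cast
    field_simp
  have hmem : ∑ a ∈ s.filter (fun a => ¬ 2 * a = q), oddHzeta k (a / q) ∈ Vminus k q :=
    Submodule.sum_mem _ fun a ha => by
      obtain ⟨has, h2a⟩ := mem_filter.mp ha
      exact oddHzeta_mem_Vminus hk (mem_Ico.mp has).1 (mem_Ico.mp has).2 h2a
  have hsum := sum_filter_add_sum_filter_not s (fun a => 2 * a = q) (fun a => oddHzeta k (a / q))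
  rw [sum_Ico_oddHzeta_div hk hodd (by omega), hhalf] at hsum
  set c : ℚ := 2 * ((q : ℚ) ^ k - 1 - N * (2 ^ k - 1)) with hc_def
  have hc : c ≠ 0 := by
    have h2q : (2 : ℚ) ^ k < (q : ℚ) ^ k :=
      pow_lt_pow_left₀ (by exact_mod_cast hq) (by norm_num) (by omega)
    have : (N : ℚ) * (2 ^ k - 1) ≤ 2 ^ k - 1 :=
      mul_le_of_le_one_left (by linarith [one_le_pow₀ (M₀ := ℚ) one_le_two (n := k)])
        (by exact_mod_cast hN)
    linarith
  rw [← (Vminus k q).smul_mem_iff hc, Rat.smul_def]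
  convert hmem using 1
  rw [hc_def]
  push_cast
  linear_combination -hsum

end

theorem stmt_10 (k q : ℕ) (hk : 2 ≤ k) (hq : 3 ≤ q) :
    Submodule.span ℚ
        (insert (1 : ℝ) (insert (((k % 2 : ℕ) : ℝ) * hzeta k 1)
          {x : ℝ | ∃ a : ℕ, 1 ≤ a ∧ 2 * a < q ∧ x = zetaMinus k a q}))
      = Submodule.span ℚ {(1 : ℝ)} ⊔ Vminus k q ∧
    (Odd k → hzeta k 1 ∈ Vminus k q) := by
  refine ⟨le_antisymm ?_ ?_, fun hodd => hzeta_one_mem_Vminus hk hodd hq⟩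
  · rw [Submodule.span_le]
    rintro _ (rfl | rfl | ⟨a, ha, haq, rfl⟩)
    · exact Submodule.mem_sup_left (Submodule.subset_span rfl)
    · rcases Nat.even_or_odd k with heven | hodd
      · simp [Nat.even_iff.mp heven]
      · rw [Nat.odd_iff.mp hodd, Nat.cast_one, one_mul]
        exact Submodule.mem_sup_right (hzeta_one_mem_Vminus hk hodd hq)
    · exact Submodule.mem_sup_right (zetaMinus_mem_Vminus hk ha haq)
  · rw [Vminus, if_neg (by omega), ← Submodule.span_union, Set.singleton_union]
    refine Submodule.span_mono (Set.insert_subset_insert fun x ⟨a, ha, haq, _, hx⟩ => ?_)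
    exact Set.mem_insert_of_mem _ ⟨a, ha, haq, hx⟩
end
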